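/- Let X = (x^(1),…,x^(N)) ∈ ℝ^{d×N} with labels y ∈ ℝ^N, and let a₁,…,a_m : [0,∞) → ℝ and w₁,…,w_m : [0,∞) → ℝ^d be differentiable curves solving the gradient flow of the two-layer linear network loss L({aᵢ},{wᵢ}) = (1/(2N)) Σ_{n=1}^N (y^(n) − Σ_{i=1}^m aᵢ·wᵢᵀx^(n))². Assume the strictly balanced initialization a(0)a(0)ᵀ = W(0)ᵀW(0), where a(0) = (a₁(0),…,a_m(0))ᵀ ∈ ℝ^m and W(0) = (w₁(0),…,w_m(0)) ∈ ℝ^{d×m}, and assume w̃(0) := Σ_{i=1}^m aᵢ(0)wᵢ(0) ≠ 0. Set w̃(t) = Σ_{i=1}^m aᵢ(t)wᵢ(t). If w̃(t) converges as t → ∞ to a limit w̃∞ satisfying Xᵀw̃∞ = y, then w̃∞ minimizes the function w ↦ ‖w‖^{3/2} − (3/2)·‖w̃(0)‖^{−1/2}·w̃(0)ᵀw over the set {w ∈ ℝ^d : Xᵀw = y}. -/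

import Mathlib

/-!
Write `g = -∇ℓ(w̃)` for the negative gradient of the square loss at the end-to-end predictor, so
that the flow reads `ȧᵢ = ⟪g, wᵢ⟫`, `ẇᵢ = aᵢ g`. It conserves `⟪wᵢ, wⱼ⟫ - aᵢaⱼ`, so the
balance persists; then every `wᵢ` is a multiple of `w̃` and `‖w̃‖ = ∑ aᵢ²`. A Grönwall bound keeps
`∑ aᵢ²` positive, and for `c` orthogonal to the data (hence to `g`) the quantity
`⟪w̃, c⟫ / √‖w̃‖` is constant in time. Letting `t → ∞` with `c = v - w̃∞` gives
`⟪w̃∞, c⟫ / √‖w̃∞‖ = ⟪w̃(0), c⟫ / √‖w̃(0)‖`: the gradient of the convex objective at `w̃∞` is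
orthogonal to the affine space of interpolators, so `w̃∞` minimizes it there.
-/

noncomputable def netLoss {d N m : ℕ} (X : Fin N → EuclideanSpace ℝ (Fin d))
    (y : Fin N → ℝ) (a : Fin m → ℝ) (w : Fin m → EuclideanSpace ℝ (Fin d)) : ℝ :=
  1 / (2 * N) * ∑ n, (y n - ∑ i, a i * ∑ j, w i j * X n j) ^ 2

open Real Filter Function Set
open scoped RealInnerProductSpace Topology

lemma eq_of_hasDerivAt_zero_of_nonneg {F : Type*} [NormedAddCommGroup F] [NormedSpace ℝ F]
    {f : ℝ → F} (hf : ∀ t, 0 ≤ t → HasDerivAt f 0 t) {t : ℝ} (ht : 0 ≤ t) : f t = f 0 :=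
  constant_of_has_deriv_right_zero (fun s hs => (hf s hs.1).continuousAt.continuousWithinAt)
    (fun s hs => (hf s hs.1).hasDerivWithinAt) t ⟨ht, le_rfl⟩

lemma pos_of_hasDerivAt_ge_neg_mul {f f' : ℝ → ℝ} {K T : ℝ} (hT : 0 ≤ T)
    (hf : ∀ t ∈ Icc 0 T, HasDerivAt f (f' t) t) (hf' : ∀ t ∈ Icc 0 T, -(K * f t) ≤ f' t)
    (h0 : 0 < f 0) : 0 < f T := by
  have hderiv : ∀ t ∈ Icc 0 T,
      HasDerivAt (fun s => f s * exp (K * s)) ((f' t + K * f t) * exp (K * t)) t := fun t ht => by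
    refine ((hf t ht).fun_mul ((hasDerivAt_id' t).const_mul K).exp).congr_deriv ?_
    ring
  have hmono : MonotoneOn (fun s => f s * exp (K * s)) (Icc 0 T) := by
    refine monotoneOn_of_hasDerivWithinAt_nonneg (convex_Icc 0 T)
      (fun t ht => (hderiv t ht).continuousAt.continuousWithinAt)
      (fun t ht => (hderiv t (interior_subset ht)).hasDerivWithinAt) fun t ht => ?_
    have := hf' t (interior_subset ht)
    exact mul_nonneg (by linarith) (exp_nonneg _)
  have := hmono ⟨le_rfl, hT⟩ ⟨hT, le_rfl⟩ hT
  simp only [mul_zero, exp_zero, mul_one] at this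
  exact pos_of_mul_pos_left (h0.trans_le this) (exp_nonneg _)

variable {E : Type*} [NormedAddCommGroup E] [InnerProductSpace ℝ E]

/-- At `u = 0` the junk value `0 / 0 = 0` is the continuous extension. -/
lemma continuous_inner_div_sqrt_norm (c : E) : Continuous fun u : E => ⟪u, c⟫ / √‖u‖ := by
  refine continuous_iff_continuousAt.2 fun u => ?_
  rcases eq_or_ne u 0 with rfl | hu
  · have hbound : ∀ v : E, ‖⟪v, c⟫ / √‖v‖‖ ≤ √‖v‖ * ‖c‖ := fun v => by
      rw [norm_div, Real.norm_eq_abs, Real.norm_of_nonneg (sqrt_nonneg _)]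
      refine div_le_of_le_mul₀ (sqrt_nonneg _) (by positivity) ?_
      calc |⟪v, c⟫| ≤ ‖v‖ * ‖c‖ := abs_real_inner_le_norm v c
        _ = √‖v‖ * ‖c‖ * √‖v‖ := by
          rw [mul_right_comm, mul_self_sqrt (norm_nonneg v)]
    have hlim : Tendsto (fun v : E => √‖v‖ * ‖c‖) (𝓝 0) (𝓝 0) := by
      have : Continuous fun v : E => √‖v‖ * ‖c‖ := by fun_prop
      simpa using this.tendsto 0
    simpa [ContinuousAt] using squeeze_zero_norm hbound hlim
  · exact (continuous_id.inner continuous_const).continuousAt.div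
      continuous_norm.sqrt.continuousAt (by positivity)

lemma rpow_three_halves_eq_sqrt_pow {x : ℝ} (hx : 0 ≤ x) : x ^ (3 / 2 : ℝ) = √x ^ 3 := by
  rw [sqrt_eq_rpow, ← rpow_natCast, ← rpow_mul hx]; norm_num

/-- The gradient of `‖·‖^{3/2}` at `u` is `(3/2) ‖u‖^{-1/2} u`; this is its convexity inequality. -/
lemma norm_rpow_three_halves_add_inner_le (u v : E) :
    ‖u‖ ^ (3 / 2 : ℝ) + 3 / 2 * (⟪u, v - u⟫ / √‖u‖) ≤ ‖v‖ ^ (3 / 2 : ℝ) := by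
  set p := √‖v‖
  set q := √‖u‖
  have hp : 0 ≤ p := sqrt_nonneg _
  have hq : 0 ≤ q := sqrt_nonneg _
  have hdir : ⟪u, v - u⟫ / q ≤ q * p ^ 2 - q ^ 3 := by
    rcases hq.eq_or_lt with hq0 | hq0
    · rw [← hq0]; simp
    rw [div_le_iff₀ hq0]
    have h1 : ⟪u, v - u⟫ ≤ ‖u‖ * ‖v‖ - ‖u‖ * ‖u‖ := by
      rw [inner_sub_right, real_inner_self_eq_norm_mul_norm]
      linarith [real_inner_le_norm u v]
    rw [← sq_sqrt (norm_nonneg u), ← sq_sqrt (norm_nonneg v)] at h1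
    linear_combination h1
  rw [rpow_three_halves_eq_sqrt_pow (norm_nonneg u), rpow_three_halves_eq_sqrt_pow (norm_nonneg v)]
  -- `2p³ - 3p²q + q³ = (p - q)²(2p + q)`
  nlinarith [mul_nonneg (sq_nonneg (p - q)) (by positivity : 0 ≤ 2 * p + q)]

variable {ι : Type*}

/-- `A Aᵀ = Wᵀ W`, for `W` the matrix with columns `W i`. -/
def IsBalanced (A : ι → ℝ) (W : ι → E) : Prop :=
  ∀ i j, ⟪W i, W j⟫ = A i * A j

namespace IsBalanced

variable {A : ι → ℝ} {W : ι → E}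

lemma smul_eq_smul (hb : IsBalanced A W) (i j : ι) : A j • W i = A i • W j := by
  rw [← sub_eq_zero, ← inner_self_eq_zero (𝕜 := ℝ)]
  simp only [inner_sub_left, inner_sub_right, real_inner_smul_left, real_inner_smul_right]
  rw [hb i i, hb i j, hb j i, hb j j]
  ring

variable [Fintype ι]

lemma sum_sq_smul (hb : IsBalanced A W) (i : ι) :
    (∑ j, A j ^ 2) • W i = A i • ∑ j, A j • W j := by
  simp only [Finset.sum_smul, Finset.smul_sum, sq, ← smul_smul, hb.smul_eq_smul i, smul_comm (A i)]

lemma norm_sum_smul (hb : IsBalanced A W) : ‖∑ i, A i • W i‖ = ∑ i, A i ^ 2 := by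
  have hsq : ‖∑ i, A i • W i‖ ^ 2 = (∑ i, A i ^ 2) ^ 2 := by
    rw [← real_inner_self_eq_norm_sq]
    simp only [sum_inner, inner_sum, real_inner_smul_left, real_inner_smul_right, sq,
      Finset.sum_mul_sum]
    exact Finset.sum_congr rfl fun i _ => Finset.sum_congr rfl fun j _ => by rw [hb j i]; ring
  exact (sq_eq_sq₀ (norm_nonneg _) (Finset.sum_nonneg fun i _ => sq_nonneg _)).1 hsq

/-- All `W i` are multiples of `w̃ = ∑ A i • W i`, so `∑ W i W iᵀ = w̃ w̃ᵀ / ∑ A i ^ 2`. -/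
lemma sum_sq_mul_sum_inner_mul_inner (hb : IsBalanced A W) (u c : E) :
    (∑ j, A j ^ 2) * ∑ i, ⟪u, W i⟫ * ⟪W i, c⟫ = ⟪u, ∑ i, A i • W i⟫ * ⟪∑ i, A i • W i, c⟫ := by
  set σ := ∑ j, A j ^ 2
  set w := ∑ i, A i • W i
  rcases eq_or_ne σ 0 with hσ | hσ
  · have hw : w = 0 := norm_eq_zero.1 (hb.norm_sum_smul.trans hσ)
    simp [hσ, hw]
  refine mul_left_cancel₀ hσ ?_
  have hterm : ∀ i, σ * (σ * (⟪u, W i⟫ * ⟪W i, c⟫)) = A i ^ 2 * (⟪u, w⟫ * ⟪w, c⟫) := fun i => by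
    have h1 := congrArg (⟪u, ·⟫) (hb.sum_sq_smul i)
    have h2 := congrArg (⟪·, c⟫) (hb.sum_sq_smul i)
    simp only [real_inner_smul_left, real_inner_smul_right] at h1 h2
    linear_combination (σ * ⟪W i, c⟫) * h1 + (A i * ⟪u, w⟫) * h2
  calc σ * (σ * ∑ i, ⟪u, W i⟫ * ⟪W i, c⟫) = ∑ i, A i ^ 2 * (⟪u, w⟫ * ⟪w, c⟫) := by
        simp only [Finset.mul_sum, hterm]
    _ = σ * (⟪u, w⟫ * ⟪w, c⟫) := by rw [← Finset.sum_mul]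

end IsBalanced

/-- The gradient flow of a two-layer linear network, with `g t` standing for `-∇ℓ(w̃ t)`. -/
def IsLinearNetFlow (a : ι → ℝ → ℝ) (w : ι → ℝ → E) (g : ℝ → E) : Prop :=
  ∀ t, 0 ≤ t → ∀ i, HasDerivAt (a i) ⟪g t, w i t⟫ t ∧ HasDerivAt (w i) (a i t • g t) t

namespace IsLinearNetFlow

variable {a : ι → ℝ → ℝ} {w : ι → ℝ → E} {g : ℝ → E}

lemma isBalanced (hf : IsLinearNetFlow a w g) (h0 : IsBalanced (a · 0) (w · 0)) {t : ℝ}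
    (ht : 0 ≤ t) : IsBalanced (a · t) (w · t) := fun i j => by
  have hconst : ∀ s, 0 ≤ s → HasDerivAt (fun s => ⟪w i s, w j s⟫ - a i s * a j s) 0 s :=
    fun s hs => by
      obtain ⟨hai, hwi⟩ := hf s hs i
      obtain ⟨haj, hwj⟩ := hf s hs j
      refine ((hwi.inner ℝ hwj).sub (hai.mul haj)).congr_deriv ?_
      simp only [real_inner_smul_left, real_inner_smul_right, real_inner_comm (w i s)]
      ring
  simpa only [h0 i j, sub_self, sub_eq_zero] using eq_of_hasDerivAt_zero_of_nonneg hconst ht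

variable [Fintype ι]

lemma hasDerivAt_sum_sq (hf : IsLinearNetFlow a w g) {t : ℝ} (ht : 0 ≤ t) :
    HasDerivAt (fun s => ∑ i, a i s ^ 2) (2 * ⟪g t, ∑ i, a i t • w i t⟫) t := by
  refine (HasDerivAt.fun_sum fun i _ => ((hf t ht i).1.pow 2)).congr_deriv ?_
  simp only [inner_sum, real_inner_smul_right, Finset.mul_sum]
  exact Finset.sum_congr rfl fun i _ => by ring

lemma hasDerivAt_sum_smul (hf : IsLinearNetFlow a w g) {t : ℝ} (ht : 0 ≤ t) :
    HasDerivAt (fun s => ∑ i, a i s • w i s)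
      (∑ i, (a i t • (a i t • g t) + ⟪g t, w i t⟫ • w i t)) t :=
  HasDerivAt.fun_sum fun i _ => (hf t ht i).1.smul (hf t ht i).2

lemma hasDerivAt_inner_sum_smul (hf : IsLinearNetFlow a w g) {c : E} {t : ℝ} (ht : 0 ≤ t)
    (hc : ⟪g t, c⟫ = 0) :
    HasDerivAt (fun s => ⟪∑ i, a i s • w i s, c⟫) (∑ i, ⟪g t, w i t⟫ * ⟪w i t, c⟫) t := by
  refine ((hf.hasDerivAt_sum_smul ht).inner ℝ (hasDerivAt_const t c)).congr_deriv ?_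
  simp [sum_inner, inner_add_left, real_inner_smul_left, hc]

/-- `(∑ aᵢ²)' = 2⟪g, w̃⟫ ≥ -2‖g‖ ∑ aᵢ²` since `‖w̃‖ = ∑ aᵢ²`. -/
lemma sum_sq_pos (hf : IsLinearNetFlow a w g) (h0 : IsBalanced (a · 0) (w · 0))
    (hg : ContinuousOn g (Ici 0)) (hpos : 0 < ∑ i, a i 0 ^ 2) {T : ℝ} (hT : 0 ≤ T) :
    0 < ∑ i, a i T ^ 2 := by
  obtain ⟨B, hB⟩ := isCompact_Icc.exists_bound_of_continuousOn
    (hg.mono (Icc_subset_Ici_self : Icc 0 T ⊆ Ici 0))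
  refine pos_of_hasDerivAt_ge_neg_mul (K := 2 * B) hT
    (fun t ht => hf.hasDerivAt_sum_sq ht.1) (fun t ht => ?_) hpos
  have hinner : |⟪g t, ∑ i, a i t • w i t⟫| ≤ B * ∑ i, a i t ^ 2 := by
    rw [← (hf.isBalanced h0 ht.1).norm_sum_smul]
    exact (abs_real_inner_le_norm _ _).trans (mul_le_mul_of_nonneg_right (hB t ht) (norm_nonneg _))
  linarith [neg_abs_le ⟪g t, ∑ i, a i t • w i t⟫]

lemma inner_div_sqrt_norm_eq (hf : IsLinearNetFlow a w g) (h0 : IsBalanced (a · 0) (w · 0))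
    (hg : ContinuousOn g (Ici 0)) (hw0 : ∑ i, a i 0 • w i 0 ≠ 0) {c : E}
    (hc : ∀ t, 0 ≤ t → ⟪g t, c⟫ = 0) {t : ℝ} (ht : 0 ≤ t) :
    ⟪∑ i, a i t • w i t, c⟫ / √‖∑ i, a i t • w i t‖ =
      ⟪∑ i, a i 0 • w i 0, c⟫ / √‖∑ i, a i 0 • w i 0‖ := by
  have hpos : ∀ s, 0 ≤ s → 0 < ∑ i, a i s ^ 2 := fun s hs =>
    hf.sum_sq_pos h0 hg (h0.norm_sum_smul ▸ norm_pos_iff.2 hw0) hs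
  have hderiv : ∀ s, 0 ≤ s →
      HasDerivAt (fun s => ⟪∑ i, a i s • w i s, c⟫ / √(∑ i, a i s ^ 2)) 0 s := fun s hs => by
    have hσ := hpos s hs
    refine ((hf.hasDerivAt_inner_sum_smul hs (hc s hs)).div
      ((hf.hasDerivAt_sum_sq hs).sqrt hσ.ne') (sqrt_pos.2 hσ).ne').congr_deriv ?_
    have key := (hf.isBalanced h0 hs).sum_sq_mul_sum_inner_mul_inner (g s) c
    rw [div_eq_zero_iff]
    left
    field_simp
    rw [sq_sqrt hσ.le]
    linear_combination key
  have := eq_of_hasDerivAt_zero_of_nonneg hderiv ht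
  simpa only [(hf.isBalanced h0 _).norm_sum_smul, ht, le_rfl] using this

end IsLinearNetFlow

section SquareLoss

variable {N : ℕ} (X : Fin N → E) (y : Fin N → ℝ)

noncomputable def sqLoss (u : E) : ℝ :=
  1 / (2 * N) * ∑ n, (y n - ⟪X n, u⟫) ^ 2

noncomputable def negGradSqLoss (u : E) : E :=
  (N : ℝ)⁻¹ • ∑ n, (y n - ⟪X n, u⟫) • X n

lemma hasGradientAt_sqLoss [CompleteSpace E] (u : E) :
    HasGradientAt (sqLoss X y) (-negGradSqLoss X y u) u := by
  rw [hasGradientAt_iff_hasFDerivAt]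
  have hterm : ∀ n, HasFDerivAt (fun u => (y n - ⟪X n, u⟫) ^ 2)
      ((2 * (y n - ⟪X n, u⟫)) • -innerSL ℝ (X n)) u := fun n => by
    simpa using ((innerSL ℝ (X n)).hasFDerivAt.const_sub (y n)).pow 2
  refine ((HasFDerivAt.fun_sum fun n _ => hterm n).const_mul (1 / (2 * N))).congr_fderiv ?_
  ext v
  simp only [one_div, mul_inv_rev, smul_neg, smul_apply, sum_apply, neg_apply,
    innerSL_apply_apply, smul_eq_mul, Finset.mul_sum, mul_neg, negGradSqLoss, map_neg, map_smul,
    map_sum, InnerProductSpace.toDual_apply_apply, ← Finset.sum_neg_distrib]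
  exact Finset.sum_congr rfl fun n _ => by ring

lemma continuous_negGradSqLoss : Continuous (negGradSqLoss X y) := by
  unfold negGradSqLoss; fun_prop

lemma inner_negGradSqLoss_eq_zero {c : E} (hc : ∀ n, ⟪X n, c⟫ = 0) (u : E) :
    ⟪negGradSqLoss X y u, c⟫ = 0 := by
  simp [negGradSqLoss, sum_inner, real_inner_smul_left, hc]

end SquareLoss

section Reparametrization

variable [Fintype ι] [DecidableEq ι] {A : ι → ℝ} {W : ι → E}

lemma sum_update_smul (i : ι) (b : ℝ) :
    ∑ j, update A i b j • W j = ∑ j, A j • W j + (b - A i) • W i := by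
  simp_rw [apply_update (fun j x => x • W j)]
  rw [Finset.sum_update_of_mem (Finset.mem_univ i), Finset.sdiff_singleton_eq_erase,
    ← Finset.add_sum_erase _ _ (Finset.mem_univ i)]
  module

lemma sum_smul_update (i : ι) (v : E) :
    ∑ j, A j • update W i v j = ∑ j, A j • W j + A i • (v - W i) := by
  simp_rw [apply_update (fun j (x : E) => A j • x) W i v]
  rw [Finset.sum_update_of_mem (Finset.mem_univ i), Finset.sdiff_singleton_eq_erase,
    ← Finset.add_sum_erase _ _ (Finset.mem_univ i)]
  module

variable [CompleteSpace E] {f : E → ℝ} {G : E}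

lemma HasGradientAt.hasDerivAt_update_coeff (hf : HasGradientAt f G (∑ j, A j • W j)) (i : ι) :
    HasDerivAt (fun b => f (∑ j, update A i b j • W j)) ⟪G, W i⟫ (A i) := by
  simp only [sum_update_smul]
  have hl : HasDerivAt (fun b => ∑ j, A j • W j + (b - A i) • W i) (W i) (A i) := by
    simpa using (((hasDerivAt_id (A i)).sub_const (A i)).smul_const (W i)).const_add
      (∑ j, A j • W j)
  exact (hasGradientAt_iff_hasFDerivAt.1 hf).comp_hasDerivAt_of_eq (A i) hl (by simp)

lemma HasGradientAt.hasGradientAt_update_vector (hf : HasGradientAt f G (∑ j, A j • W j))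
    (i : ι) : HasGradientAt (fun v => f (∑ j, A j • update W i v j)) (A i • G) (W i) := by
  simp only [sum_smul_update]
  rw [hasGradientAt_iff_hasFDerivAt]
  have hl : HasFDerivAt (fun v => ∑ j, A j • W j + A i • (v - W i))
      (A i • ContinuousLinearMap.id ℝ E) (W i) := by
    simpa using ((hasFDerivAt_id (W i)).sub_const (W i)).const_smul (A i) |>.const_add
      (∑ j, A j • W j)
  rw [← show ∑ j, A j • W j + A i • (W i - W i) = ∑ j, A j • W j by simp] at hf
  refine ((hasGradientAt_iff_hasFDerivAt.1 hf).comp (W i) hl).congr_fderiv ?_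
  ext v
  simp

end Reparametrization

lemma EuclideanSpace.inner_eq_sum_mul {d : ℕ} (u v : EuclideanSpace ℝ (Fin d)) :
    ⟪u, v⟫ = ∑ j, u j * v j := by
  simp [PiLp.inner_apply, mul_comm]

section NetLoss

variable {d N m : ℕ} (X : Fin N → EuclideanSpace ℝ (Fin d)) (y : Fin N → ℝ)

lemma netLoss_eq_sqLoss (a : Fin m → ℝ) (w : Fin m → EuclideanSpace ℝ (Fin d)) :
    netLoss X y a w = sqLoss X y (∑ i, a i • w i) := by
  simp [netLoss, sqLoss, inner_sum, real_inner_smul_right, EuclideanSpace.inner_eq_sum_mul,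
    mul_comm]

lemma isLinearNetFlow_of_gradient_flow {a : Fin m → ℝ → ℝ}
    {w : Fin m → ℝ → EuclideanSpace ℝ (Fin d)}
    (hflow : ∀ t, 0 ≤ t → ∀ i,
      HasDerivAt (a i)
        (-deriv (fun b => netLoss X y (update (a · t) i b) (w · t)) (a i t)) t ∧
      HasDerivAt (w i)
        (-gradient (fun v => netLoss X y (a · t) (update (w · t) i v)) (w i t)) t) :
    IsLinearNetFlow a w fun t => negGradSqLoss X y (∑ i, a i t • w i t) := fun t ht i => by
  have hG := hasGradientAt_sqLoss X y (∑ i, a i t • w i t)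
  obtain ⟨ha, hw⟩ := hflow t ht i
  simp only [netLoss_eq_sqLoss] at ha hw
  rw [(hG.hasDerivAt_update_coeff i).deriv, inner_neg_left, neg_neg] at ha
  rw [(hG.hasGradientAt_update_vector i).gradient, smul_neg, neg_neg] at hw
  exact ⟨ha, hw⟩

end NetLoss

/-- for gradient flow on a two-layer linear network with strictly
balanced initialization `a(0)a(0)ᵀ = W(0)ᵀW(0)` and `w̃(0) = Σᵢ aᵢ(0)wᵢ(0) ≠ 0`, if
the end-to-end predictor `w̃(t) = Σᵢ aᵢ(t)wᵢ(t)` converges to an interpolator `w̃∞`,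
then `w̃∞` minimizes `w ↦ ‖w‖^{3/2} − (3/2)‖w̃(0)‖^{−1/2} w̃(0)ᵀw` over `{w : Xᵀw = y}`. -/
theorem stmt_12 {d N m : ℕ} (X : Fin N → EuclideanSpace ℝ (Fin d)) (y : Fin N → ℝ)
    (a : Fin m → ℝ → ℝ) (w : Fin m → ℝ → EuclideanSpace ℝ (Fin d))
    (hflow : ∀ t, 0 ≤ t → ∀ i : Fin m,
      HasDerivAt (a i)
        (-deriv (fun b => netLoss X y (Function.update (fun j => a j t) i b)
          (fun j => w j t)) (a i t)) t ∧
      HasDerivAt (w i)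
        (-gradient (fun v => netLoss X y (fun j => a j t)
          (Function.update (fun j => w j t) i v)) (w i t)) t)
    (hbal : ∀ i j : Fin m, ∑ k, w i 0 k * w j 0 k = a i 0 * a j 0)
    (hinit : (∑ i, a i 0 • w i 0) ≠ 0)
    (wInf : EuclideanSpace ℝ (Fin d))
    (hconv : Filter.Tendsto (fun t => ∑ i, a i t • w i t) Filter.atTop (nhds wInf))
    (hfit : ∀ n, ∑ j, X n j * wInf j = y n) :
    let w0 : EuclideanSpace ℝ (Fin d) := ∑ i, a i 0 • w i 0
    let F : EuclideanSpace ℝ (Fin d) → ℝ := fun v =>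
      ‖v‖ ^ ((3 : ℝ) / 2) - 3 / 2 * ‖w0‖ ^ (-(1 : ℝ) / 2) * ∑ j, w0 j * v j
    ∀ v : EuclideanSpace ℝ (Fin d),
      (∀ n, ∑ j, X n j * v j = y n) → F wInf ≤ F v := by
  intro w0 F v hv
  have hnet := isLinearNetFlow_of_gradient_flow X y hflow
  have hbal0 : IsBalanced (a · 0) (w · 0) := fun i j => by
    rw [EuclideanSpace.inner_eq_sum_mul, hbal]
  have hg : ContinuousOn (fun t => negGradSqLoss X y (∑ i, a i t • w i t)) (Ici 0) :=
    (continuous_negGradSqLoss X y).comp_continuousOn fun t ht =>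
      (hnet.hasDerivAt_sum_smul ht).continuousAt.continuousWithinAt
  have hXc : ∀ n, ⟪X n, v - wInf⟫ = 0 := fun n => by
    rw [inner_sub_right, EuclideanSpace.inner_eq_sum_mul, EuclideanSpace.inner_eq_sum_mul, hv,
      hfit, sub_self]
  have hcons : ⟪wInf, v - wInf⟫ / √‖wInf‖ = ⟪w0, v - wInf⟫ / √‖w0‖ :=
    tendsto_nhds_unique (((continuous_inner_div_sqrt_norm _).tendsto _).comp hconv)
      (tendsto_const_nhds.congr' ((eventually_ge_atTop 0).mono fun t ht =>
        (hnet.inner_div_sqrt_norm_eq hbal0 hg hinit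
          (fun s _ => inner_negGradSqLoss_eq_zero X y hXc _) ht).symm))
  have hconvex := norm_rpow_three_halves_add_inner_le wInf v
  have hrpow : ‖w0‖ ^ (-(1 : ℝ) / 2) = (√‖w0‖)⁻¹ := by
    rw [neg_div, rpow_neg (norm_nonneg _), sqrt_eq_rpow]
  simp only [F, ← EuclideanSpace.inner_eq_sum_mul, hrpow]
  rw [hcons, inner_sub_right, sub_div] at hconvex
  simp only [div_eq_inv_mul] at hconvex ⊢
  linarith
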